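/- arXiv:2511.19849 — 2 statements merged into one kernel-verified Lean document; each statement's English description precedes it below -/
import Mathlib

section
/- Let A be a real n×d matrix with rank(A) = n, b ∈ ℝⁿ, and suppose the set Q = {x ∈ ℝ^d : x ≥ 0 componentwise and Ax = b} is bounded. Let c ∈ ℝ^d be a vector not contained in the row space of A, p ∈ ℝ, and H = {x ∈ ℝ^d : c·x = p}. Then every extreme point of Q ∩ H can be written as a convex combination λ·x¹ + (1−λ)·x² with λ ∈ [0,1], where x¹ and x² are extreme points of Q. -/
open Matrix Filter Topology

/-! The feasible directions at a point `x` of `Q = {x ≥ 0, A x = b}` are the `v` with `A v = 0`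
that vanish wherever `x` does: exactly the directions along which `x` can be moved both ways
inside `Q`, and `x` is a vertex of `Q` when there are none. If `x` is extreme in `Q ∩ {c ⬝ᵥ x = p}`,
no nonzero feasible direction is orthogonal to `c`, so they span a line `ℝ ∙ v`. As `Q` is bounded,
moving from `x` along `v` and along `-v` leaves `Q` after a finite time; at both exit points a
coordinate on which `v` is nonzero has become zero, so no feasible direction is left there, and
`x` lies on the segment between these two vertices of `Q`. -/

section Convex

variable {E : Type*} [AddCommGroup E] [Module ℝ E]

lemma eq_zero_of_mem_extremePoints_of_eventually_add_smul_mem {S : Set E} {x v : E}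
    (hx : x ∈ S.extremePoints ℝ) (hv : ∀ᶠ t : ℝ in 𝓝 0, x + t • v ∈ S) : v = 0 := by
  have hv' : ∀ᶠ t : ℝ in 𝓝 0, x - t • v ∈ S := by
    have hneg : Tendsto (fun t : ℝ => -t) (𝓝 0) (𝓝 0) := by
      simpa using (continuous_neg (G := ℝ)).tendsto 0
    simpa [sub_eq_add_neg] using hneg.eventually hv
  obtain ⟨t, ⟨hadd, hsub⟩, ht⟩ :=
    (((hv.and hv').filter_mono nhdsWithin_le_nhds).and self_mem_nhdsWithin).exists
      (f := 𝓝[≠] (0 : ℝ))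
  have hfix := ((mem_extremePoints.1 hx).2 _ hsub _ hadd (mem_openSegment_sub_add x (t • v))).1
  rw [sub_eq_self] at hfix
  exact (smul_eq_zero.1 hfix).resolve_left ht

lemma mem_segment_add_smul_sub_smul (x v : E) {s t : ℝ} (hs : 0 ≤ s) (ht : 0 ≤ t) :
    x ∈ segment ℝ (x + s • v) (x - t • v) := by
  have h0 : (0 : ℝ) ∈ segment ℝ s (-t) := by
    rw [segment_eq_Icc']
    exact ⟨min_le_of_right_le (neg_nonpos.2 ht), le_max_of_le_left hs⟩
  have := Set.mem_image_of_mem (LinearMap.toSpanSingleton ℝ E v).toAffineMap h0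
  rw [image_segment] at this
  simpa [sub_eq_add_neg] using (mem_segment_translate ℝ x).2 this

end Convex

lemma eq_zero_of_isBounded_of_add_smul_mem {F : Type*} [NormedAddCommGroup F] [NormedSpace ℝ F]
    {S : Set F} {x v : F} (hS : Bornology.IsBounded S) (hv : ∀ t : ℝ, 0 ≤ t → x + t • v ∈ S) :
    v = 0 := by
  obtain ⟨C, hC⟩ := isBounded_iff_forall_norm_le.1 hS
  have hbound : ∀ t : ℝ, 0 ≤ t → t * ‖v‖ ≤ C + ‖x‖ := fun t ht => calc
    t * ‖v‖ = ‖(x + t • v) - x‖ := by rw [add_sub_cancel_left, norm_smul, Real.norm_of_nonneg ht]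
    _ ≤ ‖x + t • v‖ + ‖x‖ := norm_sub_le _ _
    _ ≤ C + ‖x‖ := by gcongr; exact hC _ (hv t ht)
  have hxC : ‖x‖ ≤ C := hC x (by simpa using hv 0 le_rfl)
  by_contra hv0
  have hpos : 0 < ‖v‖ := norm_pos_iff.2 hv0
  have := hbound ((C + ‖x‖ + 1) / ‖v‖) (div_nonneg (by linarith [norm_nonneg x]) hpos.le)
  rw [div_mul_cancel₀ _ hpos.ne'] at this
  linarith

lemma Submodule.le_span_singleton_of_disjoint_ker {K V : Type*} [Field K] [AddCommGroup V]
    [Module K V] {W : Submodule K V} {f : V →ₗ[K] K} (hW : Disjoint W (LinearMap.ker f)) {v : V}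
    (hv : v ∈ W) (hv0 : v ≠ 0) : W ≤ K ∙ v := by
  rw [Submodule.disjoint_def] at hW
  have hfv : f v ≠ 0 := fun h => hv0 (hW v hv h)
  intro u hu
  have : u - (f u / f v) • v = 0 := hW _ (W.sub_mem hu (W.smul_mem _ hv)) (by simp [hfv])
  exact Submodule.mem_span_singleton.2 ⟨f u / f v, (sub_eq_zero.1 this).symm⟩

section StdPolyhedron

variable {m n : Type*} [Fintype n]

lemma exists_nonneg_add_smul_apply_eq_zero {x v : n → ℝ} (hx : ∀ i, 0 ≤ x i) {j : n}
    (hj : v j < 0) :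
    ∃ t : ℝ, 0 ≤ t ∧ (∀ i, 0 ≤ x i + t * v i) ∧ ∃ k, v k ≠ 0 ∧ x k + t * v k = 0 := by
  classical
  -- the ratio test of the simplex method
  obtain ⟨k, hk, hmin⟩ := (Finset.univ.filter fun i => v i < 0).exists_min_image
    (fun i => x i / -v i) ⟨j, by simpa using hj⟩
  simp only [Finset.mem_filter, Finset.mem_univ, true_and] at hk hmin
  have ht : 0 ≤ x k / -v k := div_nonneg (hx k) (neg_nonneg.2 hk.le)
  refine ⟨x k / -v k, ht, fun i => ?_, k, hk.ne, by
    rw [div_neg, neg_mul, div_mul_cancel₀ _ hk.ne, add_neg_cancel]⟩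
  rcases lt_or_ge (v i) 0 with hi | hi
  · have := (le_div_iff₀ (neg_pos.2 hi)).1 (hmin i hi)
    linarith [mul_neg (x k / -v k) (v i)]
  · exact add_nonneg (hx i) (mul_nonneg ht hi)

variable (A : Matrix m n ℝ) (b : m → ℝ)

def stdPolyhedron : Set (n → ℝ) := {x | (∀ i, 0 ≤ x i) ∧ A *ᵥ x = b}

def feasibleDirections (x : n → ℝ) : Submodule ℝ (n → ℝ) :=
  LinearMap.ker A.mulVecLin ⊓ ⨅ (i) (_ : x i = 0), LinearMap.ker (LinearMap.proj i)

variable {A b}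

lemma mem_feasibleDirections {x v : n → ℝ} :
    v ∈ feasibleDirections A x ↔ A *ᵥ v = 0 ∧ ∀ i, x i = 0 → v i = 0 := by
  simp [feasibleDirections]

lemma feasibleDirections_mono {x y : n → ℝ} (h : ∀ i, x i = 0 → y i = 0) :
    feasibleDirections A y ≤ feasibleDirections A x := fun v hv => by
  rw [mem_feasibleDirections] at hv ⊢
  exact ⟨hv.1, fun i hi => hv.2 i (h i hi)⟩

lemma add_smul_mem_stdPolyhedron {x v : n → ℝ} (hx : x ∈ stdPolyhedron A b) (hv : A *ᵥ v = 0)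
    {t : ℝ} (ht : ∀ i, 0 ≤ x i + t * v i) : x + t • v ∈ stdPolyhedron A b :=
  ⟨fun i => by simpa using ht i, by simp [mulVec_add, mulVec_smul, hx.2, hv]⟩

lemma eventually_add_smul_mem_stdPolyhedron {x v : n → ℝ} (hx : x ∈ stdPolyhedron A b)
    (hv : v ∈ feasibleDirections A x) : ∀ᶠ t : ℝ in 𝓝 0, x + t • v ∈ stdPolyhedron A b := by
  rw [mem_feasibleDirections] at hv
  have hnonneg : ∀ i, ∀ᶠ t : ℝ in 𝓝 0, 0 ≤ x i + t * v i := by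
    intro i
    rcases (hx.1 i).eq_or_lt with hxi | hxi
    · simp [← hxi, hv.2 i hxi.symm]
    · have : Tendsto (fun t : ℝ => x i + t * v i) (𝓝 0) (𝓝 (x i)) :=
        (by fun_prop : Continuous fun t : ℝ => x i + t * v i).tendsto' 0 _ (by simp)
      exact (this.eventually (lt_mem_nhds hxi)).mono fun _ => le_of_lt
  filter_upwards [eventually_all.2 hnonneg] with t ht
  exact add_smul_mem_stdPolyhedron hx hv.1 ht

omit [Fintype n] in
lemma apply_eq_zero_of_mem_openSegment {x y z : n → ℝ} (hy : ∀ i, 0 ≤ y i) (hz : ∀ i, 0 ≤ z i)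
    (hx : x ∈ openSegment ℝ y z) {i : n} (hxi : x i = 0) : y i = 0 := by
  obtain ⟨a, c, ha, hc, -, rfl⟩ := hx
  have hsum : a * y i + c * z i = 0 := by simpa using hxi
  have := ((add_eq_zero_iff_of_nonneg (mul_nonneg ha.le (hy i)) (mul_nonneg hc.le (hz i))).1 hsum).1
  exact (mul_eq_zero.1 this).resolve_left ha.ne'

lemma sub_mem_feasibleDirections_of_mem_openSegment {x y z : n → ℝ}
    (hx : x ∈ stdPolyhedron A b) (hy : y ∈ stdPolyhedron A b) (hz : z ∈ stdPolyhedron A b)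
    (hxyz : x ∈ openSegment ℝ y z) : y - x ∈ feasibleDirections A x :=
  mem_feasibleDirections.2 ⟨by rw [mulVec_sub, hy.2, hx.2, sub_self], fun i hi => by
    simp [apply_eq_zero_of_mem_openSegment hy.1 hz.1 hxyz hi, hi]⟩

lemma mem_extremePoints_stdPolyhedron {x : n → ℝ} (hx : x ∈ stdPolyhedron A b)
    (h : feasibleDirections A x = ⊥) : x ∈ (stdPolyhedron A b).extremePoints ℝ := by
  refine mem_extremePoints_iff_left.2 ⟨hx, fun y hy z hz hxyz => ?_⟩
  simpa [h, sub_eq_zero] using sub_mem_feasibleDirections_of_mem_openSegment hx hy hz hxyz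

lemma disjoint_feasibleDirections_ker_dotProduct {c : n → ℝ} {p : ℝ} {x : n → ℝ}
    (hx : x ∈ (stdPolyhedron A b ∩ {y | c ⬝ᵥ y = p}).extremePoints ℝ) :
    Disjoint (feasibleDirections A x) (LinearMap.ker (dotProductBilin ℝ ℝ c)) := by
  refine Submodule.disjoint_def.2 fun v hv hcv =>
    eq_zero_of_mem_extremePoints_of_eventually_add_smul_mem hx ?_
  have hcv : c ⬝ᵥ v = 0 := by simpa using hcv
  filter_upwards [eventually_add_smul_mem_stdPolyhedron hx.1.1 hv] with t ht
  exact ⟨ht, by simp [dotProduct_add, dotProduct_smul, hcv, hx.1.2.out]⟩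

lemma exists_neg_of_mulVec_eq_zero (hbdd : Bornology.IsBounded (stdPolyhedron A b))
    {x v : n → ℝ} (hx : x ∈ stdPolyhedron A b) (hv : A *ᵥ v = 0) (hv0 : v ≠ 0) : ∃ j, v j < 0 := by
  by_contra! hnonneg
  exact hv0 <| eq_zero_of_isBounded_of_add_smul_mem hbdd fun t ht =>
    add_smul_mem_stdPolyhedron hx hv fun i => add_nonneg (hx.1 i) (mul_nonneg ht (hnonneg i))

lemma exists_nonneg_add_smul_mem_extremePoints (hbdd : Bornology.IsBounded (stdPolyhedron A b))
    {x v : n → ℝ} (hx : x ∈ stdPolyhedron A b) (hv : v ∈ feasibleDirections A x) (hv0 : v ≠ 0)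
    (hspan : feasibleDirections A x ≤ ℝ ∙ v) :
    ∃ t : ℝ, 0 ≤ t ∧ x + t • v ∈ (stdPolyhedron A b).extremePoints ℝ := by
  rw [mem_feasibleDirections] at hv
  obtain ⟨j, hj⟩ := exists_neg_of_mulVec_eq_zero hbdd hx hv.1 hv0
  obtain ⟨t, ht, hnonneg, k, hvk, hk⟩ := exists_nonneg_add_smul_apply_eq_zero hx.1 hj
  refine ⟨t, ht, mem_extremePoints_stdPolyhedron (add_smul_mem_stdPolyhedron hx hv.1 hnonneg)
    (eq_bot_iff.2 fun u hu => ?_)⟩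
  have hzero : ∀ i, x i = 0 → (x + t • v) i = 0 := fun i hi => by simp [hi, hv.2 i hi]
  obtain ⟨s, rfl⟩ := Submodule.mem_span_singleton.1 (hspan (feasibleDirections_mono hzero hu))
  have : s * v k = 0 := by simpa using (mem_feasibleDirections.1 hu).2 k (by simpa using hk)
  simp [(mul_eq_zero.1 this).resolve_right hvk]

end StdPolyhedron

theorem extremePoint_inter_hyperplane_convexComb_general
    (n d : ℕ) (A : Matrix (Fin n) (Fin d) ℝ)
    (b : Fin n → ℝ) (Q : Set (Fin d → ℝ))
    (hQ : Q = {x | (∀ i, 0 ≤ x i) ∧ A.mulVec x = b})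
    (hbdd : Bornology.IsBounded Q)
    (c : Fin d → ℝ)
    (p : ℝ) (H : Set (Fin d → ℝ)) (hH : H = {x | c ⬝ᵥ x = p})
    (x : Fin d → ℝ) (hx : x ∈ Set.extremePoints ℝ (Q ∩ H)) :
    ∃ l ∈ Set.Icc (0 : ℝ) 1, ∃ x₁ ∈ Set.extremePoints ℝ Q, ∃ x₂ ∈ Set.extremePoints ℝ Q,
      x = l • x₁ + (1 - l) • x₂ := by
  obtain rfl : Q = stdPolyhedron A b := hQ
  obtain rfl := hH
  have hxQ : x ∈ stdPolyhedron A b := hx.1.1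
  by_cases hV : feasibleDirections A x = ⊥
  · have hext := mem_extremePoints_stdPolyhedron hxQ hV
    exact ⟨1, ⟨zero_le_one, le_rfl⟩, x, hext, x, hext, by simp⟩
  obtain ⟨v, hv, hv0⟩ := Submodule.exists_mem_ne_zero_of_ne_bot hV
  have hspan : feasibleDirections A x ≤ ℝ ∙ v :=
    Submodule.le_span_singleton_of_disjoint_ker (disjoint_feasibleDirections_ker_dotProduct hx)
      hv hv0
  obtain ⟨t₁, ht₁, hx₁⟩ := exists_nonneg_add_smul_mem_extremePoints hbdd hxQ hv hv0 hspan
  obtain ⟨t₂, ht₂, hx₂⟩ := exists_nonneg_add_smul_mem_extremePoints hbdd hxQ (neg_mem hv)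
    (neg_ne_zero.2 hv0) (by rwa [← Set.neg_singleton, Submodule.span_neg])
  have hseg := mem_segment_add_smul_sub_smul x v ht₁ ht₂
  rw [segment_eq_image] at hseg
  obtain ⟨l, hl, hxl⟩ := hseg
  refine ⟨l, hl, _, hx₂, _, hx₁, hxl.symm.trans ?_⟩
  rw [smul_neg, ← sub_eq_add_neg]
  exact add_comm _ _

/-- If `rank A = n`, `Q = {x : x ≥ 0, A x = b}` is bounded, and `c` is not in the
row space of `A`, then every extreme point of `Q ∩ {x : c·x = p}` is a convex
combination of two extreme points of `Q`. -/
theorem extremePoint_inter_hyperplane_convexComb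
    (n d : ℕ) (A : Matrix (Fin n) (Fin d) ℝ) (hrank : A.rank = n)
    (b : Fin n → ℝ) (Q : Set (Fin d → ℝ))
    (hQ : Q = {x | (∀ i, 0 ≤ x i) ∧ A.mulVec x = b})
    (hbdd : Bornology.IsBounded Q)
    (c : Fin d → ℝ) (hc : c ∉ Submodule.span ℝ (Set.range A))
    (p : ℝ) (H : Set (Fin d → ℝ)) (hH : H = {x | c ⬝ᵥ x = p})
    (x : Fin d → ℝ) (hx : x ∈ Set.extremePoints ℝ (Q ∩ H)) :
    ∃ l ∈ Set.Icc (0 : ℝ) 1, ∃ x₁ ∈ Set.extremePoints ℝ Q, ∃ x₂ ∈ Set.extremePoints ℝ Q,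
      x = l • x₁ + (1 - l) • x₂ :=
  extremePoint_inter_hyperplane_convexComb_general n d A b Q hQ hbdd c p H hH x hx
end

section
/- Let n, m ∈ ℕ and d = 2n + m. Let A be a real n×d matrix with rank(A) = n, b ∈ ℝⁿ, c ∈ ℝ^d a vector not contained in the row space of A, p ∈ ℝ, and r ∈ ℝ^d. Suppose the set Q = {x ∈ ℝ^d : x ≥ 0 componentwise and Ax = b} is bounded and the feasible region F = {x ∈ Q : c·x ≥ p} is nonempty. Then there exist a point x* ∈ F maximizing r·x over F, a scalar λ ∈ [0,1], and points x¹, x² ∈ Q, each having at most n strictly positive components, such that x* = λ·x¹ + (1−λ)·x². -/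
open Matrix


lemma dot_cont {d : ℕ} (c : Fin d → ℝ) : Continuous fun x : Fin d → ℝ => c ⬝ᵥ x := by
  simp only [dotProduct]
  exact continuous_finset_sum _ fun i _ => continuous_const.mul (continuous_apply i)

lemma eps_nonneg {d : ℕ} (x z : Fin d → ℝ) (hx : ∀ i, 0 ≤ x i)
    (hz : ∀ i, x i = 0 → z i = 0) :
    ∃ ε > 0, ∀ t : ℝ, |t| ≤ ε → ∀ i, 0 ≤ x i + t * z i := by
  classical
  by_cases hS : (Finset.univ.filter fun i => z i ≠ 0).Nonempty
  · refine ⟨(Finset.univ.filter fun i => z i ≠ 0).inf' hS (fun i => x i / |z i|), ?_, ?_⟩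
    · rw [gt_iff_lt, Finset.lt_inf'_iff]
      intro i hi
      simp only [Finset.mem_filter] at hi
      have hzi : z i ≠ 0 := hi.2
      have hxi : 0 < x i := lt_of_le_of_ne (hx i) (fun h => hzi (hz i h.symm))
      positivity
    · intro t ht i
      by_cases hzi : z i = 0
      · simpa [hzi] using hx i
      · have h1 : (Finset.univ.filter fun j => z j ≠ 0).inf' hS (fun j => x j / |z j|)
            ≤ x i / |z i| := Finset.inf'_le _ (by simp [hzi])
        have h2 : |t * z i| ≤ (x i / |z i|) * |z i| := by
          rw [abs_mul]
          exact mul_le_mul_of_nonneg_right (ht.trans h1) (abs_nonneg _)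
        have h3 : (x i / |z i|) * |z i| = x i := by
          field_simp
        nlinarith [neg_abs_le (t * z i)]
  · have hz0 : ∀ i, z i = 0 := by
      intro i
      by_contra h
      exact hS ⟨i, by simp [h]⟩
    exact ⟨1, one_pos, fun t _ i => by simpa [hz0 i] using hx i⟩

lemma card_le_of_ker {n d : ℕ} (A : Matrix (Fin n) (Fin d) ℝ) (S : Finset (Fin d))
    (h : ∀ z : Fin d → ℝ, A.mulVec z = 0 → (∀ i, i ∉ S → z i = 0) → z = 0) :
    S.card ≤ n := by
  classical
  have hli : LinearIndependent ℝ (fun (i : S) => (fun j => A j i : Fin n → ℝ)) := by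
    rw [Fintype.linearIndependent_iff]
    intro g hg i
    set z : Fin d → ℝ := fun j => if hj : j ∈ S then g ⟨j, hj⟩ else 0 with hzdef
    have hzout : ∀ j, j ∉ S → z j = 0 := by
      intro j hj; simp [hzdef, hj]
    have hzin : ∀ j : S, z j = g j := by
      intro j; simp [hzdef, j.2]
    have hzker : A.mulVec z = 0 := by
      funext j
      have hgj := congrFun hg j
      simp only [Finset.sum_apply, Pi.smul_apply, smul_eq_mul, Pi.zero_apply] at hgj
      rw [Pi.zero_apply, mulVec, dotProduct]
      have h1 : ∑ i : Fin d, A j i * z i = ∑ i ∈ S, A j i * z i := by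
        rw [← Finset.sum_subset (Finset.subset_univ S)]
        intro i _ hi
        rw [hzout i hi, mul_zero]
      rw [h1, ← Finset.sum_attach S (fun i => A j i * z i), ← Finset.univ_eq_attach]
      simp only [hzin]
      simpa [mul_comm] using hgj
    have := h z hzker hzout
    have := congrFun this i
    rw [hzin i] at this
    exact this
  have hcard := hli.fintype_card_le_finrank
  simpa [Fintype.card_coe, Module.finrank_fin_fun] using hcard

/-- Standard LP theory lemma: for `d = 2n + m`, `rank A = n`, `c` not in the row
space of `A`, `Q = {x : x ≥ 0, A x = b}` bounded and `F = {x ∈ Q : c·x ≥ p}`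
nonempty, there is a maximizer `xs` of `r·x` over `F` which is a convex
combination of two points of `Q`, each with at most `n` positive components. -/
theorem lp_optimal_convex_combination
    (n m d : ℕ) (hd : d = 2 * n + m)
    (A : Matrix (Fin n) (Fin d) ℝ) (hrank : A.rank = n)
    (b : Fin n → ℝ)
    (c : Fin d → ℝ) (hc : c ∉ Submodule.span ℝ (Set.range A))
    (p : ℝ) (r : Fin d → ℝ)
    (Q F : Set (Fin d → ℝ))
    (hQ : Q = {x | (∀ i, 0 ≤ x i) ∧ A.mulVec x = b})
    (hbdd : Bornology.IsBounded Q)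
    (hF : F = {x ∈ Q | p ≤ c ⬝ᵥ x})
    (hne : F.Nonempty) :
    ∃ xs ∈ F, (∀ x ∈ F, r ⬝ᵥ x ≤ r ⬝ᵥ xs) ∧
      ∃ l ∈ Set.Icc (0 : ℝ) 1, ∃ x₁ ∈ Q, ∃ x₂ ∈ Q,
        (Finset.univ.filter fun i => 0 < x₁ i).card ≤ n ∧
        (Finset.univ.filter fun i => 0 < x₂ i).card ≤ n ∧
        xs = l • x₁ + (1 - l) • x₂ := by
  classical
  -- basic topology / convexity of Q and F
  have hQclosed : IsClosed Q := by
    rw [hQ]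
    have h1 : IsClosed {x : Fin d → ℝ | ∀ i, 0 ≤ x i} := by
      have : {x : Fin d → ℝ | ∀ i, 0 ≤ x i} = ⋂ i, {x | 0 ≤ x i} := by
        ext x; simp
      rw [this]
      exact isClosed_iInter fun i => isClosed_le continuous_const (continuous_apply i)
    have h2 : IsClosed {x : Fin d → ℝ | A.mulVec x = b} := by
      have hcont : Continuous fun x : Fin d → ℝ => A.mulVec x :=
        continuous_pi fun j => dot_cont (A j)
      exact isClosed_eq hcont continuous_const
    exact h1.inter h2
  have hFclosed : IsClosed F := by
    rw [hF]
    exact hQclosed.inter (isClosed_le continuous_const (dot_cont c))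
  have hFsubQ : F ⊆ Q := by rw [hF]; exact fun x hx => hx.1
  have hFcomp : IsCompact F :=
    Metric.isCompact_of_isClosed_isBounded hFclosed (hbdd.subset hFsubQ)
  have hQconv : Convex ℝ Q := by
    rw [hQ]
    intro x hx y hy a b' ha hb hab
    constructor
    · intro i
      have := hx.1 i; have := hy.1 i
      simp only [Pi.add_apply, Pi.smul_apply, smul_eq_mul]
      positivity
    · simp only [mulVec_add, mulVec_smul, hx.2, hy.2]
      rw [← add_smul, hab, one_smul]
  have hFconv : Convex ℝ F := by
    rw [hF]
    intro x hx y hy a b' ha hb hab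
    refine ⟨hQconv hx.1 hy.1 ha hb hab, ?_⟩
    have h1 : c ⬝ᵥ (a • x + b' • y) = a * (c ⬝ᵥ x) + b' * (c ⬝ᵥ y) := by
      simp [dotProduct_add, dotProduct_smul, smul_eq_mul]
    rw [h1]
    have h2 := mul_le_mul_of_nonneg_left hx.2 ha
    have h3 := mul_le_mul_of_nonneg_left hy.2 hb
    have h4 : a * p + b' * p = p := by rw [← add_mul, hab, one_mul]
    linarith
  -- maximizer x₀
  obtain ⟨x₀, hx₀F, hx₀max⟩ := hFcomp.exists_isMaxOn hne (dot_cont r).continuousOn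
  -- the face of maximizers
  set M : Set (Fin d → ℝ) := F ∩ {x | r ⬝ᵥ x = r ⬝ᵥ x₀} with hM
  have hMcomp : IsCompact M :=
    hFcomp.inter_right (isClosed_eq (dot_cont r) continuous_const)
  have hMne : M.Nonempty := ⟨x₀, hx₀F, rfl⟩
  obtain ⟨xs, hxsM⟩ := hMcomp.extremePoints_nonempty hMne
  have hxsF : xs ∈ F := (mem_extremePoints.mp hxsM).1.1
  have hxsval : r ⬝ᵥ xs = r ⬝ᵥ x₀ := (mem_extremePoints.mp hxsM).1.2
  have hmax : ∀ x ∈ F, r ⬝ᵥ x ≤ r ⬝ᵥ xs := fun x hx => hxsval ▸ hx₀max hx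
  have hxsQ : xs ∈ Q := hFsubQ hxsF
  have hxsnn : ∀ i, 0 ≤ xs i := (hQ ▸ hxsQ).1
  have hxsAb : A.mulVec xs = b := (hQ ▸ hxsQ).2
  have hxscp : p ≤ c ⬝ᵥ xs := (hF ▸ hxsF).2
  -- key extremality property
  have hdotadd : ∀ (v x y : Fin d → ℝ) (t : ℝ), v ⬝ᵥ (x + t • y) = v ⬝ᵥ x + t * (v ⬝ᵥ y) := by
    intro v x y t
    simp [dotProduct_add, dotProduct_smul, smul_eq_mul]
  have hkey : ∀ z : Fin d → ℝ, A.mulVec z = 0 → (∀ i, xs i = 0 → z i = 0) →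
      (c ⬝ᵥ z = 0 ∨ p < c ⬝ᵥ xs) → z = 0 := by
    intro z hAz hsupp hdisj
    obtain ⟨ε₁, hε₁pos, hε₁⟩ := eps_nonneg xs z hxsnn hsupp
    have hε : ∃ ε > 0, ∀ t : ℝ, |t| ≤ ε → xs + t • z ∈ F := by
      have hmemQ : ∀ t : ℝ, |t| ≤ ε₁ → xs + t • z ∈ Q := by
        intro t ht
        rw [hQ]
        refine ⟨fun i => by simpa using hε₁ t ht i, ?_⟩
        simp [mulVec_add, mulVec_smul, hxsAb, hAz]
      rcases hdisj with hcz | hp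
      · refine ⟨ε₁, hε₁pos, fun t ht => ?_⟩
        rw [hF]
        refine ⟨hmemQ t ht, ?_⟩
        rw [hdotadd c xs z t, hcz, mul_zero, add_zero]
        exact hxscp
      · have hpos2 : 0 < (c ⬝ᵥ xs - p) / (|c ⬝ᵥ z| + 1) := by
          have := sub_pos.2 hp
          positivity
        refine ⟨min ε₁ ((c ⬝ᵥ xs - p) / (|c ⬝ᵥ z| + 1)), lt_min hε₁pos hpos2, fun t ht => ?_⟩
        rw [hF]
        refine ⟨hmemQ t (ht.trans (min_le_left _ _)), ?_⟩
        rw [hdotadd c xs z t]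
        have h1 : |t * (c ⬝ᵥ z)| ≤ ((c ⬝ᵥ xs - p) / (|c ⬝ᵥ z| + 1)) * |c ⬝ᵥ z| := by
          rw [abs_mul]
          exact mul_le_mul_of_nonneg_right (ht.trans (min_le_right _ _)) (abs_nonneg _)
        have h2 : ((c ⬝ᵥ xs - p) / (|c ⬝ᵥ z| + 1)) * |c ⬝ᵥ z| ≤ c ⬝ᵥ xs - p := by
          rw [div_mul_eq_mul_div, div_le_iff₀ (by positivity)]
          nlinarith [abs_nonneg (c ⬝ᵥ z), sub_pos.2 hp]
        nlinarith [neg_abs_le (t * (c ⬝ᵥ z))]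
    obtain ⟨ε, hεpos, hεF⟩ := hε
    have hp1 : xs + ε • z ∈ F := hεF ε (by rw [abs_of_pos hεpos])
    have hp2 : xs + (-ε) • z ∈ F := hεF (-ε) (by rw [abs_neg, abs_of_pos hεpos])
    have hrz : r ⬝ᵥ z = 0 := by
      have e1 := hmax _ hp1
      have e2 := hmax _ hp2
      rw [hdotadd r xs z ε] at e1
      rw [hdotadd r xs z (-ε)] at e2
      nlinarith
    have hm1 : xs + ε • z ∈ M := by
      refine ⟨hp1, ?_⟩
      show r ⬝ᵥ (xs + ε • z) = r ⬝ᵥ x₀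
      rw [hdotadd r xs z ε, hrz, mul_zero, add_zero, hxsval]
    have hm2 : xs + (-ε) • z ∈ M := by
      refine ⟨hp2, ?_⟩
      show r ⬝ᵥ (xs + (-ε) • z) = r ⬝ᵥ x₀
      rw [hdotadd r xs z (-ε), hrz, mul_zero, add_zero, hxsval]
    have hseg : xs ∈ openSegment ℝ (xs + (-ε) • z) (xs + ε • z) := by
      refine ⟨1/2, 1/2, by norm_num, by norm_num, by norm_num, ?_⟩
      module
    have hext := (mem_extremePoints.mp hxsM).2 _ hm2 _ hm1 hseg
    funext i
    have := congrFun hext.2 i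
    simp only [Pi.add_apply, Pi.smul_apply, smul_eq_mul] at this
    have hzi : ε * z i = 0 := by linarith
    rcases mul_eq_zero.mp hzi with h | h
    · exact absurd h (ne_of_gt hεpos)
    · exact h
  by_cases hcase : ∀ z : Fin d → ℝ, A.mulVec z = 0 → (∀ i, xs i = 0 → z i = 0) → z = 0
  · have hcard : (Finset.univ.filter fun i => 0 < xs i).card ≤ n := by
      apply card_le_of_ker A
      intro z hAz hz
      apply hcase z hAz
      intro i hi
      apply hz
      simp [Finset.mem_filter, hi]
    refine ⟨xs, hxsF, hmax, 1, ⟨zero_le_one, le_refl 1⟩, xs, hxsQ, xs, hxsQ, hcard, hcard, ?_⟩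
    module
  · push_neg at hcase
    obtain ⟨z, hAz, hsupp, hzne⟩ := hcase
    have hcz : c ⬝ᵥ z ≠ 0 := fun h => hzne (hkey z hAz hsupp (Or.inl h))
    set T : Set ℝ := {t | xs + t • z ∈ Q} with hT
    have hTclosed : IsClosed T := by
      have hcont : Continuous fun t : ℝ => xs + t • z :=
        continuous_const.add (continuous_id.smul continuous_const)
      exact hQclosed.preimage hcont
    obtain ⟨R, hR⟩ := hbdd.subset_closedBall 0
    have hznorm : (0:ℝ) < ‖z‖ := by
      rw [norm_pos_iff]
      exact hzne
    have hTbdd : ∀ t ∈ T, |t| ≤ (R + ‖xs‖) / ‖z‖ := by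
      intro t ht
      have h1 : ‖xs + t • z‖ ≤ R := by
        simpa [Metric.mem_closedBall, dist_zero_right] using hR ht
      have h2 : ‖t • z‖ ≤ ‖xs + t • z‖ + ‖xs‖ := by
        calc ‖t • z‖ = ‖(xs + t • z) - xs‖ := by congr 1; abel
        _ ≤ ‖xs + t • z‖ + ‖xs‖ := norm_sub_le _ _
      rw [norm_smul, Real.norm_eq_abs] at h2
      rw [le_div_iff₀ hznorm]
      nlinarith
    have hTBddAbove : BddAbove T := ⟨(R + ‖xs‖) / ‖z‖, fun t ht => (abs_le.mp (hTbdd t ht)).2⟩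
    have hTBddBelow : BddBelow T := ⟨-((R + ‖xs‖) / ‖z‖), fun t ht => (abs_le.mp (hTbdd t ht)).1⟩
    have hmove : ∀ t : ℝ, xs + t • z ∈ Q → (∀ i, (xs + t • z) i = 0 → z i = 0) →
        ∃ δ > 0, ∀ s : ℝ, |s| ≤ δ → (t + s) ∈ T := by
      intro t htQ hsuppt
      obtain ⟨δ, hδpos, hδ⟩ := eps_nonneg (xs + t • z) z (hQ ▸ htQ).1 hsuppt
      refine ⟨δ, hδpos, fun s hs => ?_⟩
      show xs + (t + s) • z ∈ Q
      rw [hQ]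
      constructor
      · intro i
        have := hδ s hs i
        simp only [Pi.add_apply, Pi.smul_apply, smul_eq_mul] at this ⊢
        linarith [this]
      · simp [mulVec_add, mulVec_smul, hxsAb, hAz]
    have h0T : (0:ℝ) ∈ T := by
      show xs + (0:ℝ) • z ∈ Q
      simpa using hxsQ
    obtain ⟨ε, hεpos, hεT⟩ := hmove 0 (by simpa using hxsQ) (by
      intro i hi
      apply hsupp
      simpa using hi)
    have hεmem : ε ∈ T := by simpa using hεT ε (le_of_eq (abs_of_pos hεpos))
    have hnegεmem : -ε ∈ T := by simpa using hεT (-ε) (le_of_eq (by rw [abs_neg, abs_of_pos hεpos]))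
    have hTne : T.Nonempty := ⟨0, h0T⟩
    set tp := sSup T with htp
    set tm := sInf T with htm
    have htpT : tp ∈ T := hTclosed.csSup_mem hTne hTBddAbove
    have htmT : tm ∈ T := hTclosed.csInf_mem hTne hTBddBelow
    have htppos : 0 < tp := lt_of_lt_of_le hεpos (le_csSup hTBddAbove hεmem)
    have htmneg : tm < 0 := lt_of_le_of_lt (csInf_le hTBddBelow hnegεmem) (by linarith)
    have hcrit : ∀ t : ℝ, xs + t • z ∈ Q → (∀ s : ℝ, 0 < s → ¬ ((t + s) ∈ T ∧ (t - s) ∈ T)) →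
        ∃ i, (xs + t • z) i = 0 ∧ z i ≠ 0 := by
      intro t htQ hstop
      by_contra hcon
      push_neg at hcon
      obtain ⟨δ, hδpos, hδ⟩ := hmove t htQ (fun i hi => hcon i hi)
      exact hstop δ hδpos ⟨hδ δ (le_of_eq (abs_of_pos hδpos)),
        by simpa [sub_eq_add_neg] using hδ (-δ) (le_of_eq (by rw [abs_neg, abs_of_pos hδpos]))⟩
    have hcrit₁ : ∃ i, (xs + tp • z) i = 0 ∧ z i ≠ 0 := by
      apply hcrit tp htpT
      intro s hs hmem
      have := le_csSup hTBddAbove hmem.1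
      linarith
    have hcrit₂ : ∃ i, (xs + tm • z) i = 0 ∧ z i ≠ 0 := by
      apply hcrit tm htmT
      intro s hs hmem
      have := csInf_le hTBddBelow hmem.2
      linarith
    have hcardgen : ∀ t : ℝ, xs + t • z ∈ Q → (∃ i, (xs + t • z) i = 0 ∧ z i ≠ 0) →
        (Finset.univ.filter fun i => 0 < (xs + t • z) i).card ≤ n := by
      rintro t htQ ⟨i₀, hi₀zero, hi₀z⟩
      apply card_le_of_ker A
      intro w hAw hwout
      have hwzero : ∀ i, (xs + t • z) i = 0 → w i = 0 := by
        intro i hi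
        apply hwout
        simp only [Finset.mem_filter, Finset.mem_univ, true_and]
        rw [hi]
        exact lt_irrefl 0
      have hwsupp : ∀ i, xs i = 0 → w i = 0 := by
        intro i hi
        apply hwzero
        have hz0 := hsupp i hi
        simp [Pi.add_apply, hi, hz0]
      set α := (c ⬝ᵥ w) / (c ⬝ᵥ z) with hα
      have hu : w - α • z = 0 := by
        apply hkey _ ?_ ?_ (Or.inl ?_)
        · simp [mulVec_sub, mulVec_smul, hAw, hAz]
        · intro i hi
          simp [Pi.sub_apply, Pi.smul_apply, hwsupp i hi, hsupp i hi]
        · have hcu : c ⬝ᵥ (w - α • z) = c ⬝ᵥ w - α * (c ⬝ᵥ z) := by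
            simp [dotProduct_sub, dotProduct_smul, smul_eq_mul]
          rw [hcu, hα, div_mul_cancel₀ _ hcz, sub_self]
      have hwαz : w = α • z := sub_eq_zero.mp hu
      have hα0 : α = 0 := by
        have hwi₀ : w i₀ = 0 := hwzero i₀ hi₀zero
        rw [hwαz] at hwi₀
        simp only [Pi.smul_apply, smul_eq_mul] at hwi₀
        rcases mul_eq_zero.mp hwi₀ with h | h
        · exact h
        · exact absurd h hi₀z
      rw [hwαz, hα0, zero_smul]
    have hcard₁ := hcardgen tp htpT hcrit₁
    have hcard₂ := hcardgen tm htmT hcrit₂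
    set l := -tm / (tp - tm) with hl
    have hden : 0 < tp - tm := by linarith
    have hden : 0 < tp - tm := by linarith
    have hlnn : 0 ≤ l := by
      rw [hl]
      exact div_nonneg (by linarith) (by linarith)
    clear_value tp tm
    refine ⟨xs, hxsF, hmax, l, ⟨hlnn, ?_⟩, xs + tp • z, htpT, xs + tm • z, htmT,
      hcard₁, hcard₂, ?_⟩
    · rw [hl, div_le_one hden]
      linarith
    · have hl2 : l * (tp - tm) = -tm := by
        rw [hl, div_mul_cancel₀ _ (ne_of_gt hden)]
      funext i
      simp only [Pi.add_apply, Pi.smul_apply, smul_eq_mul]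
      linear_combination (-(z i)) * hl2
end
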